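/- arXiv:math/9912186 — 2 statements merged into one kernel-verified Lean document; each statement's English description precedes it below -/
import Mathlib

section
/- Let H be a Hopf algebra over k[q,q^{-1}] and define H~ := { a ∈ H | δ_n(a) ∈ (q-1)^n H^{⊗n} for all n ∈ ℕ }. Then H~ is a subalgebra of H: it contains 1 and is closed under multiplication. -/
open TensorProduct

noncomputable section

universe u
variable (R : Type u) [CommRing R] (H : Type u) [Ring H] [HopfAlgebra R H]

/-- Right-nested tensor power `H ⊗ ⋯ ⊗ H ⊗ R`, bundled to get instances. -/
def TPowM : ℕ → ModuleCat.{u} R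
  | 0 => ModuleCat.of R R
  | n+1 => ModuleCat.of R (H ⊗[R] (TPowM n))

abbrev TPow (n : ℕ) : Type u := (TPowM R H n)

/-- Iterated coproduct `Δ^n : H → H^{⊗ n}`. -/
def Delta : ∀ n : ℕ, H →ₗ[R] TPow R H n
  | 0 => Coalgebra.counit
  | n+1 => (TensorProduct.map LinearMap.id (Delta n)) ∘ₗ Coalgebra.comul

/-- The projection `id - η ∘ ε`. -/
def projKer : H →ₗ[R] H :=
  LinearMap.id - (Algebra.linearMap R H) ∘ₗ Coalgebra.counit

/-- `(id - η∘ε)^{⊗ n}`. -/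
def PMap : ∀ n : ℕ, TPow R H n →ₗ[R] TPow R H n
  | 0 => LinearMap.id
  | n+1 => TensorProduct.map (projKer R H) (PMap n)

/-- Drinfeld's map `δ_n := (id - η∘ε)^{⊗ n} ∘ Δ^n`. -/
def ddelta (n : ℕ) : H →ₗ[R] TPow R H n := (PMap R H n) ∘ₗ (Delta R H n)

/-!
Write `π = id - η ∘ ε`, so that `δ_{n+1} = (π ⊗ δ_n) ∘ Δ`. Then `δ_n(ab)` is a combination of
terms `f (δ_p a ⊗ δ_q b)` with `p + q ≥ n`: since `Δ` is multiplicative and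
`π (uv) = π u * π v + ε v • π u + ε u • π v`, each such term for `δ_n` becomes three terms for
`δ_{n+1}`, in which `p`, `q` or both go up by one. If `D ^ p ∣ δ_p a` and `D ^ q ∣ δ_q b` for all
`p, q`, every term, hence `δ_n(ab)`, is divisible by `D ^ n`.
-/

open Pointwise LinearMap

variable {R H}

lemma ddelta_succ (n : ℕ) :
    ddelta R H (n + 1) = map (projKer R H) (ddelta R H n) ∘ₗ Coalgebra.comul := by
  change map (projKer R H) (PMap R H n) ∘ₗ map LinearMap.id (Delta R H n) ∘ₗ Coalgebra.comul = _
  rw [← comp_assoc, ← map_comp]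
  rfl

lemma ddelta_succ_apply (n : ℕ) (x : H) :
    ddelta R H (n + 1) x = map (projKer R H) (ddelta R H n) (Coalgebra.comul x) :=
  congr($(ddelta_succ n) x)

lemma projKer_apply (u : H) : projKer R H u = u - Coalgebra.counit (R := R) u • (1 : H) := by
  simp [projKer, Algebra.smul_def]

lemma projKer_one : projKer R H 1 = 0 := by
  simp [projKer_apply]

lemma projKer_mul (u v : H) :
    projKer R H (u * v) = projKer R H u * projKer R H v
      + Coalgebra.counit (R := R) v • projKer R H u + Coalgebra.counit (R := R) u • projKer R H v := by
  simp only [projKer_apply, Bialgebra.counit_mul, mul_sub, sub_mul, smul_sub, smul_smul,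
    smul_mul_assoc, mul_smul_comm, mul_one, one_mul, mul_comm (Coalgebra.counit (R := R) v)]
  abel

lemma ddelta_succ_one (n : ℕ) : ddelta R H (n + 1) 1 = 0 := by
  rw [ddelta_succ_apply, Bialgebra.comul_one, Algebra.TensorProduct.one_def, map_tmul,
    projKer_one, zero_tmul]
  rfl

section Expansion

variable {P Q N : Type*} [AddCommGroup P] [Module R P] [AddCommGroup Q] [Module R Q]
  [AddCommGroup N] [Module R N]

lemma map_projKer_mul'_tensorTensorTensorComm (α : H →ₗ[R] P) (β : H →ₗ[R] Q)
    (f : P ⊗[R] Q →ₗ[R] N) (X Y : H ⊗[R] H) :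
    map (projKer R H ∘ₗ mul' R H) (f ∘ₗ map α β) (tensorTensorTensorComm R H H H H (X ⊗ₜ Y)) =
      (map (mul' R H) f ∘ₗ (tensorTensorTensorComm R H P H Q).toLinearMap)
          (map (projKer R H) α X ⊗ₜ map (projKer R H) β Y)
        + (lTensor H f ∘ₗ (TensorProduct.assoc R H P Q).toLinearMap)
          (map (projKer R H) α X ⊗ₜ β (TensorProduct.lid R H (rTensor H Coalgebra.counit Y)))
        + (lTensor H f ∘ₗ (leftComm R P H Q).toLinearMap)
          (α (TensorProduct.lid R H (rTensor H Coalgebra.counit X)) ⊗ₜ map (projKer R H) β Y) := by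
  induction X using TensorProduct.induction_on with
  | zero => simp
  | add X₁ X₂ h₁ h₂ =>
    simp only [add_tmul, map_add, h₁, h₂]
    abel
  | tmul x₁ x₂ =>
    induction Y using TensorProduct.induction_on with
    | zero => simp
    | add Y₁ Y₂ h₁ h₂ =>
      simp only [tmul_add, map_add, h₁, h₂]
      abel
    | tmul y₁ y₂ =>
      simp only [tensorTensorTensorComm_tmul, map_tmul, comp_apply, mul'_apply, projKer_mul,
        rTensor_tmul, lid_tmul, map_smul, LinearEquiv.coe_coe, assoc_tmul, leftComm_tmul,
        lTensor_tmul, add_tmul, ← smul_tmul', tmul_smul]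

end Expansion

section Filtration

variable (N : Type u) [AddCommGroup N] [Module R N]

def ddeltaFiltration (n : ℕ) : Submodule R (H ⊗[R] H →ₗ[R] N) :=
  Submodule.span R {B | ∃ (p q : ℕ) (f : TPow R H p ⊗[R] TPow R H q →ₗ[R] N),
    n ≤ p + q ∧ B = f ∘ₗ map (ddelta R H p) (ddelta R H q)}

def ddeltaStep : (H ⊗[R] H →ₗ[R] N) →ₗ[R] H ⊗[R] H →ₗ[R] H ⊗[R] N :=
  lcomp R (H ⊗[R] N) (Coalgebra.comul (R := R) (A := H ⊗[R] H)) ∘ₗ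
    mapBilinear (RingHom.id R) (H ⊗[R] H) (H ⊗[R] H) H N (projKer R H ∘ₗ mul' R H)

variable {N} {p q : ℕ}

lemma ddeltaStep_apply (B : H ⊗[R] H →ₗ[R] N) :
    ddeltaStep N B = map (projKer R H ∘ₗ mul' R H) B ∘ₗ Coalgebra.comul := rfl

/- The next three maps are declared on `TPow R H (p + 1)` rather than on the defeq
`H ⊗[R] TPow R H p`, so that composing them with `ddelta R H (p + 1)` is well typed
at the level of instances. -/

def prependMul (f : TPow R H p ⊗[R] TPow R H q →ₗ[R] N) :
    TPow R H (p + 1) ⊗[R] TPow R H (q + 1) →ₗ[R] H ⊗[R] N :=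
  map (mul' R H) f ∘ₗ (tensorTensorTensorComm R H (TPow R H p) H (TPow R H q)).toLinearMap

def prependLeft (f : TPow R H p ⊗[R] TPow R H q →ₗ[R] N) :
    TPow R H (p + 1) ⊗[R] TPow R H q →ₗ[R] H ⊗[R] N :=
  lTensor H f ∘ₗ (TensorProduct.assoc R H (TPow R H p) (TPow R H q)).toLinearMap

def prependRight (f : TPow R H p ⊗[R] TPow R H q →ₗ[R] N) :
    TPow R H p ⊗[R] TPow R H (q + 1) →ₗ[R] H ⊗[R] N :=
  lTensor H f ∘ₗ (leftComm R (TPow R H p) H (TPow R H q)).toLinearMap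

lemma ddeltaStep_comp_map_ddelta (f : TPow R H p ⊗[R] TPow R H q →ₗ[R] N) :
    ddeltaStep N (f ∘ₗ map (ddelta R H p) (ddelta R H q)) =
      prependMul f ∘ₗ map (ddelta R H (p + 1)) (ddelta R H (q + 1))
        + prependLeft f ∘ₗ map (ddelta R H (p + 1)) (ddelta R H q)
        + prependRight f ∘ₗ map (ddelta R H p) (ddelta R H (q + 1)) := by
  refine TensorProduct.ext' fun x y => ?_
  have h := map_projKer_mul'_tensorTensorTensorComm (ddelta R H p) (ddelta R H q) f
    (Coalgebra.comul x) (Coalgebra.comul y)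
  simp only [Coalgebra.rTensor_counit_comul, lid_tmul, one_smul] at h
  simp only [ddeltaStep_apply, comp_apply, LinearMap.add_apply, TensorProduct.comul_tmul,
    AlgebraTensorModule.tensorTensorTensorComm_eq, map_tmul]
  rw [ddelta_succ_apply, ddelta_succ_apply]
  exact h

lemma ddeltaStep_mem_ddeltaFiltration {n : ℕ} {B : H ⊗[R] H →ₗ[R] N}
    (hB : B ∈ ddeltaFiltration N n) : ddeltaStep N B ∈ ddeltaFiltration (H ⊗[R] N) (n + 1) := by
  induction hB using Submodule.span_induction with
  | zero => simp
  | add B₁ B₂ _ _ h₁ h₂ => simpa using add_mem h₁ h₂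
  | smul r B _ h => simpa using Submodule.smul_mem _ r h
  | mem B hB =>
    obtain ⟨p, q, f, hpq, rfl⟩ := hB
    rw [ddeltaStep_comp_map_ddelta]
    refine add_mem (add_mem ?_ ?_) ?_ <;>
      refine Submodule.subset_span ⟨_, _, _, ?_, rfl⟩ <;> omega

lemma ddelta_zero_comp_mul' :
    ddelta R H 0 ∘ₗ mul' R H = mul' R R ∘ₗ map (ddelta R H 0) (ddelta R H 0) :=
  TensorProduct.ext' fun x y => Bialgebra.counit_mul (R := R) x y

lemma ddelta_succ_comp_mul' (n : ℕ) :
    ddelta R H (n + 1) ∘ₗ mul' R H = ddeltaStep (TPow R H n) (ddelta R H n ∘ₗ mul' R H) := by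
  refine TensorProduct.ext' fun x y => ?_
  have h : map (mul' R H) (mul' R H) (Coalgebra.comul (x ⊗ₜ[R] y)) = Coalgebra.comul (x * y) :=
    congr($((Bialgebra.mulCoalgHom R H).map_comp_comul) (x ⊗ₜ y))
  -- the equation is moved to `H ⊗[R] TPow R H n`, where the rewrites below are type-correct
  show (ddelta R H (n + 1) (x * y) : H ⊗[R] TPow R H n) =
    ddeltaStep (TPow R H n) (ddelta R H n ∘ₗ mul' R H) (x ⊗ₜ y)
  rw [ddeltaStep_apply, map_comp, comp_apply, comp_apply, h]
  exact ddelta_succ_apply n (x * y)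

lemma ddelta_comp_mul'_mem_ddeltaFiltration (n : ℕ) :
    ddelta R H n ∘ₗ mul' R H ∈ ddeltaFiltration (TPow R H n) n := by
  induction n with
  | zero => exact Submodule.subset_span ⟨0, 0, mul' R R, le_rfl, ddelta_zero_comp_mul'⟩
  | succ n ih =>
    rw [ddelta_succ_comp_mul']
    exact ddeltaStep_mem_ddeltaFiltration ih

end Filtration

def drinfeldSubmodule (D : R) : Submodule R H :=
  ⨅ n, (D ^ n • (⊤ : Submodule R (TPow R H n))).comap (ddelta R H n)

lemma mem_drinfeldSubmodule {D : R} {a : H} :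
    a ∈ drinfeldSubmodule D ↔ ∀ n, ∃ y, ddelta R H n a = D ^ n • y := by
  simp [drinfeldSubmodule, Submodule.mem_iInf, Submodule.mem_smul_pointwise_iff_exists, eq_comm]

lemma apply_tmul_mem_of_mem_ddeltaFiltration {N : Type u} [AddCommGroup N] [Module R N] {D : R}
    {n : ℕ} {B : H ⊗[R] H →ₗ[R] N} (hB : B ∈ ddeltaFiltration N n) {a b : H}
    (ha : a ∈ drinfeldSubmodule D) (hb : b ∈ drinfeldSubmodule D) :
    B (a ⊗ₜ b) ∈ D ^ n • (⊤ : Submodule R N) := by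
  induction hB using Submodule.span_induction with
  | zero => exact zero_mem _
  | add B₁ B₂ _ _ h₁ h₂ => exact add_mem h₁ h₂
  | smul r B _ h => exact Submodule.smul_mem _ r h
  | mem B hB =>
    obtain ⟨p, q, f, hpq, rfl⟩ := hB
    obtain ⟨u, hu⟩ := mem_drinfeldSubmodule.mp ha p
    obtain ⟨v, hv⟩ := mem_drinfeldSubmodule.mp hb q
    obtain ⟨m, hm⟩ := Nat.exists_eq_add_of_le hpq
    have h : f (map (ddelta R H p) (ddelta R H q) (a ⊗ₜ b)) = D ^ n • D ^ m • f (u ⊗ₜ v) := by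
      rw [map_tmul, hu, hv, ← smul_tmul', tmul_smul, map_smul, map_smul, smul_smul, smul_smul,
        ← pow_add, ← pow_add, hm]
    rw [comp_apply, h]
    exact Submodule.smul_mem_pointwise_smul _ _ _ Submodule.mem_top

lemma one_mem_drinfeldSubmodule (D : R) : (1 : H) ∈ drinfeldSubmodule D := by
  refine mem_drinfeldSubmodule.mpr fun n => ?_
  cases n with
  | zero => exact ⟨ddelta R H 0 1, by rw [pow_zero, one_smul]⟩
  | succ n => exact ⟨0, by rw [ddelta_succ_one, smul_zero]⟩

lemma mul_mem_drinfeldSubmodule {D : R} {a b : H} (ha : a ∈ drinfeldSubmodule D)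
    (hb : b ∈ drinfeldSubmodule D) : a * b ∈ drinfeldSubmodule D :=
  Submodule.mem_iInf _ |>.mpr fun n =>
    apply_tmul_mem_of_mem_ddeltaFiltration (ddelta_comp_mul'_mem_ddeltaFiltration n) ha hb

def drinfeldSubalgebra (D : R) : Subalgebra R H :=
  (drinfeldSubmodule D).toSubalgebra (one_mem_drinfeldSubmodule D)
    fun _ _ => mul_mem_drinfeldSubmodule

theorem stmt2_general (k : Type u) [Field k]
    (H : Type u) [Ring H] [HopfAlgebra (LaurentPolynomial k) H] :
    ∃ S : Subalgebra (LaurentPolynomial k) H,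
      (S : Set H) =
        {a : H | ∀ n : ℕ, ∃ y : TPow (LaurentPolynomial k) H n,
          ddelta (LaurentPolynomial k) H n a = ((LaurentPolynomial.T 1 - 1 : LaurentPolynomial k) ^ n) • y} :=
  ⟨drinfeldSubalgebra (LaurentPolynomial.T 1 - 1),
    Set.ext fun _ => mem_drinfeldSubmodule⟩

/-- Drinfeld's subalgebra `H~ := { a ∈ H | δ_n(a) ∈ (q-1)^n H^{⊗n}  ∀ n }`
of a Hopf algebra over the Laurent polynomial ring `k[q,q⁻¹]`:
it contains `1` and is closed under multiplication, i.e. it is a subalgebra. -/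
theorem stmt2 (k : Type u) [Field k] [CharZero k]
    (H : Type u) [Ring H] [HopfAlgebra (LaurentPolynomial k) H] :
    ∃ S : Subalgebra (LaurentPolynomial k) H,
      (S : Set H) =
        {a : H | ∀ n : ℕ, ∃ y : TPow (LaurentPolynomial k) H n,
          ddelta (LaurentPolynomial k) H n a = ((LaurentPolynomial.T 1 - 1 : LaurentPolynomial k) ^ n) • y} :=
  stmt2_general k H

end
end

section
/- In the quantum function algebra F̂_q[SL_2] with generators a, b, c, d, the coproduct satisfies: the elements H_+ := (a-1)/(q-1), E := b/(q-1), F := c/(q-1), H_- := (d-1)/(q-1) generate a k[q,q^{-1}]-Hopf subalgebra of F_q[SL_2] = k(q) ⊗ F̂_q[SL_2], with relations H_+E = qEH_+ + E, H_+F = qFH_+ + F, EH_- = qH_-E + E, FH_- = qH_-F + F, EF = FE, H_+H_- - H_-H_+ = (q - q^{-1})EF, and H_- + H_+ = (q-1)(qEF - H_+H_-). -/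
open TensorProduct

noncomputable section

section AuxHopf

open Coalgebra HopfAlgebra

variable {R A : Type*} [CommRing R] [Ring A]

/-- product of two representations -/
noncomputable def reprMul [Bialgebra R A] {x y : A} {ι κ : Type*}
    (rx : Coalgebra.Repr R x ι) (ry : Coalgebra.Repr R y κ) : Coalgebra.Repr R (x * y) (ι × κ) where
  index := rx.index ×ˢ ry.index
  left p := rx.left p.1 * ry.left p.2
  right p := rx.right p.1 * ry.right p.2
  eq := by
    rw [Bialgebra.comul_mul (R := R), ← rx.eq, ← ry.eq, Finset.sum_mul_sum]
    rw [Finset.sum_product]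
    simp [Algebra.TensorProduct.tmul_mul_tmul]

lemma repr_sum_counit_smul_right [Module R A] [Coalgebra R A] {z : A} {ι : Type*}
    (r : Coalgebra.Repr R z ι) :
    ∑ i ∈ r.index, Coalgebra.counit (R := R) (r.left i) • r.right i = z := by
  have h := Coalgebra.sum_counit_tmul_eq (R := R) r
  apply_fun TensorProduct.lid R A at h
  simp only [map_sum, lid_tmul, one_smul] at h
  exact h

lemma repr_sum_counit_smul_left [Module R A] [Coalgebra R A] {z : A} {ι : Type*}
    (r : Coalgebra.Repr R z ι) :
    ∑ i ∈ r.index, Coalgebra.counit (R := R) (r.right i) • r.left i = z := by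
  have h := Coalgebra.sum_tmul_counit_eq (R := R) r
  apply_fun TensorProduct.rid R A at h
  simp only [map_sum, rid_tmul, one_smul] at h
  exact h

lemma antipode_one' [HopfAlgebra R A] : antipode (R := R) (1 : A) = 1 := by
  have h := HopfAlgebra.mul_antipode_rTensor_comul_apply (R := R) (A := A) 1
  simpa [Bialgebra.comul_one, Algebra.TensorProduct.one_def] using h

lemma antipode_mul_rev [HopfAlgebra R A] (x y : A) :
    antipode (R := R) (x * y) = antipode (R := R) y * antipode (R := R) x := by
  classical
  let S : A →ₗ[R] A := antipode (R := R)
  have hS : ∀ z : A, S z = antipode (R := R) z := fun _ => rfl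
  let m : A ⊗[R] A →ₗ[R] A := LinearMap.mul' R A
  let f₂ : (A ⊗[R] A) ⊗[R] (A ⊗[R] A) →ₗ[R] A :=
    m ∘ₗ TensorProduct.map m (m ∘ₗ TensorProduct.map S S ∘ₗ (TensorProduct.comm R A A).toLinearMap)
      ∘ₗ (TensorProduct.tensorTensorTensorComm R A A A A).toLinearMap
  let G : (A ⊗[R] (A ⊗[R] A)) ⊗[R] (A ⊗[R] (A ⊗[R] A)) →ₗ[R] A :=
    m ∘ₗ TensorProduct.map (S ∘ₗ m) f₂
      ∘ₗ (TensorProduct.tensorTensorTensorComm R A (A ⊗[R] A) A (A ⊗[R] A)).toLinearMap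
  have keyG : ∀ x1 x2 x3 y1 y2 y3 : A,
      G ((x1 ⊗ₜ (x2 ⊗ₜ x3)) ⊗ₜ (y1 ⊗ₜ (y2 ⊗ₜ y3)))
        = antipode (R := R) (x1 * y1) *
            ((x2 * y2) * (antipode (R := R) y3 * antipode (R := R) x3)) := by
    intro x1 x2 x3 y1 y2 y3
    simp [G, f₂, m, TensorProduct.tensorTensorTensorComm_tmul, LinearMap.mul'_apply, hS]
  let rx := ℛ R x
  let ry := ℛ R y
  let rxL : ∀ i : A × A, Coalgebra.Repr R (rx.left i) (A × A) := fun i => ℛ R _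
  let rxR : ∀ i : A × A, Coalgebra.Repr R (rx.right i) (A × A) := fun i => ℛ R _
  let ryL : ∀ i : A × A, Coalgebra.Repr R (ry.left i) (A × A) := fun i => ℛ R _
  let ryR : ∀ i : A × A, Coalgebra.Repr R (ry.right i) (A × A) := fun i => ℛ R _
  have EQx := Coalgebra.sum_tmul_tmul_eq rx rxL rxR
  have EQy := Coalgebra.sum_tmul_tmul_eq ry ryL ryR
  have hXY2 : G ((∑ i ∈ rx.index, ∑ k ∈ (rxR i).index,
        rx.left i ⊗ₜ[R] ((rxR i).left k ⊗ₜ[R] (rxR i).right k)) ⊗ₜ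
      (∑ j ∈ ry.index, ∑ l ∈ (ryR j).index,
        ry.left j ⊗ₜ[R] ((ryR j).left l ⊗ₜ[R] (ryR j).right l)))
      = ∑ i ∈ rx.index, ∑ j ∈ ry.index, ∑ l ∈ (ryR j).index, ∑ k ∈ (rxR i).index,
          antipode (R := R) (rx.left i * ry.left j) *
            ((rxR i).left k * (ryR j).left l *
              (antipode (R := R) ((ryR j).right l) * antipode (R := R) ((rxR i).right k))) := by
    rw [TensorProduct.sum_tmul]
    simp only [TensorProduct.sum_tmul, TensorProduct.tmul_sum, map_sum, keyG]
  have hXY1 : G ((∑ i ∈ rx.index, ∑ k ∈ (rxL i).index,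
        (rxL i).left k ⊗ₜ[R] ((rxL i).right k ⊗ₜ[R] rx.right i)) ⊗ₜ
      (∑ j ∈ ry.index, ∑ l ∈ (ryL j).index,
        (ryL j).left l ⊗ₜ[R] ((ryL j).right l ⊗ₜ[R] ry.right j)))
      = ∑ i ∈ rx.index, ∑ j ∈ ry.index, ∑ l ∈ (ryL j).index, ∑ k ∈ (rxL i).index,
          antipode (R := R) ((rxL i).left k * (ryL j).left l) *
            ((rxL i).right k * (ryL j).right l *
              (antipode (R := R) (ry.right j) * antipode (R := R) (rx.right i))) := by
    rw [TensorProduct.sum_tmul]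
    simp only [TensorProduct.sum_tmul, TensorProduct.tmul_sum, map_sum, keyG]
  have claim1 : (∑ i ∈ rx.index, ∑ j ∈ ry.index, ∑ l ∈ (ryR j).index, ∑ k ∈ (rxR i).index,
          antipode (R := R) (rx.left i * ry.left j) *
            ((rxR i).left k * (ryR j).left l *
              (antipode (R := R) ((ryR j).right l) * antipode (R := R) ((rxR i).right k))))
      = antipode (R := R) (x * y) := by
    calc
      _ = ∑ i ∈ rx.index, ∑ j ∈ ry.index, ∑ k ∈ (rxR i).index, ∑ l ∈ (ryR j).index,
            antipode (R := R) (rx.left i * ry.left j) *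
              ((rxR i).left k * (ryR j).left l *
                (antipode (R := R) ((ryR j).right l) * antipode (R := R) ((rxR i).right k))) := by
          exact Finset.sum_congr rfl fun i _ => Finset.sum_congr rfl fun j _ => Finset.sum_comm
      _ = ∑ i ∈ rx.index, ∑ j ∈ ry.index, ∑ k ∈ (rxR i).index,
            Coalgebra.counit (R := R) (ry.right j) •
              (antipode (R := R) (rx.left i * ry.left j) *
                ((rxR i).left k * antipode (R := R) ((rxR i).right k))) := by
          refine Finset.sum_congr rfl fun i _ => Finset.sum_congr rfl fun j _ =>
            Finset.sum_congr rfl fun k _ => ?_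
          calc
            _ = ∑ l ∈ (ryR j).index, antipode (R := R) (rx.left i * ry.left j) *
                  ((rxR i).left k * (((ryR j).left l * antipode (R := R) ((ryR j).right l)) *
                    antipode (R := R) ((rxR i).right k))) := by
                refine Finset.sum_congr rfl fun l _ => ?_
                rw [mul_assoc ((rxR i).left k), ← mul_assoc ((ryR j).left l)]
            _ = antipode (R := R) (rx.left i * ry.left j) *
                  ((rxR i).left k * ((∑ l ∈ (ryR j).index,
                    (ryR j).left l * antipode (R := R) ((ryR j).right l)) *
                      antipode (R := R) ((rxR i).right k))) := by
                rw [← Finset.mul_sum, ← Finset.mul_sum, ← Finset.sum_mul]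
            _ = _ := by
                rw [HopfAlgebra.sum_mul_antipode_eq_smul (ryR j)]
                simp [smul_mul_assoc, mul_smul_comm]
      _ = ∑ i ∈ rx.index, ∑ k ∈ (rxR i).index, ∑ j ∈ ry.index,
            Coalgebra.counit (R := R) (ry.right j) •
              (antipode (R := R) (rx.left i * ry.left j) *
                ((rxR i).left k * antipode (R := R) ((rxR i).right k))) := by
          exact Finset.sum_congr rfl fun i _ => Finset.sum_comm
      _ = ∑ i ∈ rx.index, ∑ k ∈ (rxR i).index,
            antipode (R := R) (rx.left i * y) *
              ((rxR i).left k * antipode (R := R) ((rxR i).right k)) := by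
          refine Finset.sum_congr rfl fun i _ => Finset.sum_congr rfl fun k _ => ?_
          have hy : ∑ j ∈ ry.index, Coalgebra.counit (R := R) (ry.right j) •
              (rx.left i * ry.left j) = rx.left i * y := by
            calc ∑ j ∈ ry.index, Coalgebra.counit (R := R) (ry.right j) •
                  (rx.left i * ry.left j)
                = ∑ j ∈ ry.index, rx.left i *
                    (Coalgebra.counit (R := R) (ry.right j) • ry.left j) :=
                  Finset.sum_congr rfl fun j _ => (mul_smul_comm _ _ _).symm
              _ = rx.left i * ∑ j ∈ ry.index,
                    Coalgebra.counit (R := R) (ry.right j) • ry.left j :=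
                  (Finset.mul_sum _ _ _).symm
              _ = rx.left i * y := by rw [repr_sum_counit_smul_left (R := R) ry]
          calc ∑ j ∈ ry.index, Coalgebra.counit (R := R) (ry.right j) •
                (antipode (R := R) (rx.left i * ry.left j) *
                  ((rxR i).left k * antipode (R := R) ((rxR i).right k)))
              = (∑ j ∈ ry.index, Coalgebra.counit (R := R) (ry.right j) •
                  antipode (R := R) (rx.left i * ry.left j)) *
                  ((rxR i).left k * antipode (R := R) ((rxR i).right k)) := by
                rw [Finset.sum_mul]
                exact Finset.sum_congr rfl fun j _ => (smul_mul_assoc _ _ _).symm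
            _ = antipode (R := R) (rx.left i * y) *
                  ((rxR i).left k * antipode (R := R) ((rxR i).right k)) := by
                congr 1
                rw [← hy, map_sum]
                exact Finset.sum_congr rfl fun j _ => (map_smul _ _ _).symm
      _ = ∑ i ∈ rx.index, Coalgebra.counit (R := R) (rx.right i) •
            antipode (R := R) (rx.left i * y) := by
          refine Finset.sum_congr rfl fun i _ => ?_
          rw [← Finset.mul_sum, HopfAlgebra.sum_mul_antipode_eq_smul (rxR i)]
          simp [mul_smul_comm]
      _ = antipode (R := R) (x * y) := by
          have hx : ∑ i ∈ rx.index, Coalgebra.counit (R := R) (rx.right i) •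
              (rx.left i * y) = x * y := by
            calc ∑ i ∈ rx.index, Coalgebra.counit (R := R) (rx.right i) • (rx.left i * y)
                = (∑ i ∈ rx.index, Coalgebra.counit (R := R) (rx.right i) • rx.left i) * y := by
                  rw [Finset.sum_mul]
                  exact Finset.sum_congr rfl fun i _ => (smul_mul_assoc _ _ _).symm
              _ = x * y := by rw [repr_sum_counit_smul_left (R := R) rx]
          rw [← hx, map_sum]
          exact Finset.sum_congr rfl fun i _ => (map_smul _ _ _).symm
  have claim2 : (∑ i ∈ rx.index, ∑ j ∈ ry.index, ∑ l ∈ (ryL j).index, ∑ k ∈ (rxL i).index,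
          antipode (R := R) ((rxL i).left k * (ryL j).left l) *
            ((rxL i).right k * (ryL j).right l *
              (antipode (R := R) (ry.right j) * antipode (R := R) (rx.right i))))
      = antipode (R := R) y * antipode (R := R) x := by
    calc
      _ = ∑ i ∈ rx.index, ∑ j ∈ ry.index,
            (Coalgebra.counit (R := R) (rx.left i) * Coalgebra.counit (R := R) (ry.left j)) •
              (antipode (R := R) (ry.right j) * antipode (R := R) (rx.right i)) := by
          refine Finset.sum_congr rfl fun i _ => Finset.sum_congr rfl fun j _ => ?_
          calc
            ∑ l ∈ (ryL j).index, ∑ k ∈ (rxL i).index,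
                antipode (R := R) ((rxL i).left k * (ryL j).left l) *
                  ((rxL i).right k * (ryL j).right l *
                    (antipode (R := R) (ry.right j) * antipode (R := R) (rx.right i)))
                = ∑ k ∈ (rxL i).index, ∑ l ∈ (ryL j).index,
                    (antipode (R := R) ((rxL i).left k * (ryL j).left l) *
                      ((rxL i).right k * (ryL j).right l)) *
                    (antipode (R := R) (ry.right j) * antipode (R := R) (rx.right i)) := by
                  rw [Finset.sum_comm]
                  exact Finset.sum_congr rfl fun k _ => Finset.sum_congr rfl fun l _ =>
                    (mul_assoc _ _ _).symm
              _ = (∑ k ∈ (rxL i).index, ∑ l ∈ (ryL j).index,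
                    antipode (R := R) ((rxL i).left k * (ryL j).left l) *
                      ((rxL i).right k * (ryL j).right l)) *
                    (antipode (R := R) (ry.right j) * antipode (R := R) (rx.right i)) := by
                  rw [Finset.sum_mul]
                  exact Finset.sum_congr rfl fun k _ => (Finset.sum_mul _ _ _).symm
              _ = (Coalgebra.counit (R := R) (rx.left i * ry.left j) • (1 : A)) *
                    (antipode (R := R) (ry.right j) * antipode (R := R) (rx.right i)) := by
                  congr 1
                  have hax := HopfAlgebra.sum_antipode_mul_eq_smul (reprMul (rxL i) (ryL j))
                  simp only [reprMul] at hax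
                  rw [Finset.sum_product] at hax
                  exact hax
              _ = _ := by
                  rw [Bialgebra.counit_mul, smul_mul_assoc, one_mul]
      _ = ∑ i ∈ rx.index, Coalgebra.counit (R := R) (rx.left i) •
            (antipode (R := R) y * antipode (R := R) (rx.right i)) := by
          refine Finset.sum_congr rfl fun i _ => ?_
          calc
            ∑ j ∈ ry.index,
                (Coalgebra.counit (R := R) (rx.left i) * Coalgebra.counit (R := R) (ry.left j)) •
                  (antipode (R := R) (ry.right j) * antipode (R := R) (rx.right i))
                = Coalgebra.counit (R := R) (rx.left i) • ∑ j ∈ ry.index,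
                    (Coalgebra.counit (R := R) (ry.left j) • antipode (R := R) (ry.right j)) *
                      antipode (R := R) (rx.right i) := by
                  rw [Finset.smul_sum]
                  exact Finset.sum_congr rfl fun j _ => by
                    rw [mul_smul, smul_mul_assoc]
              _ = Coalgebra.counit (R := R) (rx.left i) •
                    ((∑ j ∈ ry.index, Coalgebra.counit (R := R) (ry.left j) •
                      antipode (R := R) (ry.right j)) * antipode (R := R) (rx.right i)) := by
                  rw [Finset.sum_mul]
              _ = _ := by
                  have hyy : ∑ j ∈ ry.index, Coalgebra.counit (R := R) (ry.left j) •
                      antipode (R := R) (ry.right j) = antipode (R := R) y := by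
                    have h1 : ∑ j ∈ ry.index, Coalgebra.counit (R := R) (ry.left j) •
                        antipode (R := R) (ry.right j)
                        = antipode (R := R) (∑ j ∈ ry.index,
                            Coalgebra.counit (R := R) (ry.left j) • ry.right j) := by
                      rw [map_sum]
                      exact Finset.sum_congr rfl fun j _ => (map_smul _ _ _).symm
                    rw [h1, repr_sum_counit_smul_right (R := R) ry]
                  rw [hyy]
      _ = antipode (R := R) y * antipode (R := R) x := by
          have hxx : ∑ i ∈ rx.index, Coalgebra.counit (R := R) (rx.left i) •
              antipode (R := R) (rx.right i) = antipode (R := R) x := by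
            have h1 : ∑ i ∈ rx.index, Coalgebra.counit (R := R) (rx.left i) •
                antipode (R := R) (rx.right i)
                = antipode (R := R) (∑ i ∈ rx.index,
                    Coalgebra.counit (R := R) (rx.left i) • rx.right i) := by
              rw [map_sum]
              exact Finset.sum_congr rfl fun i _ => (map_smul _ _ _).symm
            rw [h1, repr_sum_counit_smul_right (R := R) rx]
          rw [← hxx, Finset.mul_sum]
          exact Finset.sum_congr rfl fun i _ => by rw [mul_smul_comm]
  calc antipode (R := R) (x * y) = _ := claim1.symm
    _ = _ := hXY2.symm
    _ = _ := by rw [← EQx, ← EQy]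
    _ = _ := hXY1
    _ = antipode (R := R) y * antipode (R := R) x := claim2

end AuxHopf

section Keys
variable {K M : Type*} [Field K] [AddCommGroup M] [Module K M]

lemma keyHp (q : K) (hq1 : q - 1 ≠ 0) (AA AO OA OO BC : M) :
    (q - 1)⁻¹ • (AA + BC - OO)
      = (q - 1) • ((q - 1)⁻¹ • ((q - 1)⁻¹ • (AA - AO - OA + OO)))
        + (q - 1)⁻¹ • (AO - OO) + (q - 1)⁻¹ • (OA - OO)
        + (q - 1) • ((q - 1)⁻¹ • ((q - 1)⁻¹ • BC)) := by
  match_scalars <;> field_simp <;> ring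

lemma keyE (q : K) (hq1 : q - 1 ≠ 0) (AB OB BD BO : M) :
    (q - 1)⁻¹ • (AB + BD)
      = (q - 1) • ((q - 1)⁻¹ • ((q - 1)⁻¹ • (AB - OB))) + (q - 1)⁻¹ • OB
        + (q - 1) • ((q - 1)⁻¹ • ((q - 1)⁻¹ • (BD - BO))) + (q - 1)⁻¹ • BO := by
  match_scalars <;> field_simp <;> ring
end Keys

section Rels
variable {K M : Type*} [Field K] [Ring M] [Algebra K M]

lemma relA (q : K) (hq1 : q - 1 ≠ 0) (a b : M) (hab : a * b = q • (b * a)) :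
    ((q-1)⁻¹ • (a - 1)) * ((q-1)⁻¹ • b)
      = q • (((q-1)⁻¹ • b) * ((q-1)⁻¹ • (a - 1))) + (q-1)⁻¹ • b := by
  simp only [smul_mul_assoc, mul_smul_comm, sub_mul, mul_sub, one_mul, mul_one, smul_sub,
    smul_add, smul_smul, hab]
  match_scalars <;> field_simp <;> ring

lemma relB (q : K) (hq1 : q - 1 ≠ 0) (b d : M) (hbd : b * d = q • (d * b)) :
    ((q-1)⁻¹ • b) * ((q-1)⁻¹ • (d - 1))
      = q • (((q-1)⁻¹ • (d - 1)) * ((q-1)⁻¹ • b)) + (q-1)⁻¹ • b := by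
  simp only [smul_mul_assoc, mul_smul_comm, sub_mul, mul_sub, one_mul, mul_one, smul_sub,
    smul_add, smul_smul, hbd]
  match_scalars <;> field_simp <;> ring

lemma relC (q : K) (hq1 : q - 1 ≠ 0) (a b c d : M)
    (had : a * d - d * a = (q - q⁻¹) • (b * c)) :
    ((q-1)⁻¹ • (a - 1)) * ((q-1)⁻¹ • (d - 1)) - ((q-1)⁻¹ • (d - 1)) * ((q-1)⁻¹ • (a - 1))
      = (q - q⁻¹) • (((q-1)⁻¹ • b) * ((q-1)⁻¹ • c)) := by
  have hda : d * a = a * d - (q - q⁻¹) • (b * c) := by rw [← had]; abel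
  simp only [smul_mul_assoc, mul_smul_comm, sub_mul, mul_sub, one_mul, mul_one, smul_sub,
    smul_add, smul_smul, hda]
  match_scalars <;> field_simp <;> ring

lemma relD (q : K) (hq1 : q - 1 ≠ 0) (a b c d : M)
    (hdet' : a * d = 1 + q • (b * c)) :
    (q-1)⁻¹ • (d - 1) + (q-1)⁻¹ • (a - 1)
      = (q - 1) • (q • (((q-1)⁻¹ • b) * ((q-1)⁻¹ • c))
          - ((q-1)⁻¹ • (a - 1)) * ((q-1)⁻¹ • (d - 1))) := by
  simp only [smul_mul_assoc, mul_smul_comm, sub_mul, mul_sub, one_mul, mul_one, smul_sub,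
    smul_add, smul_smul, hdet']
  match_scalars <;> field_simp <;> ring
end Rels

/-- The embedding `k[q,q⁻¹] → k(q)` sending `q` to `X`. -/
def iR (k : Type) [Field k] : LaurentPolynomial k →ₐ[k] RatFunc k :=
  (AddMonoidAlgebra.lift k (RatFunc k) ℤ)
    ((Units.coeHom (RatFunc k)).comp
      (zpowersHom (RatFunc k)ˣ (Units.mk0 RatFunc.X RatFunc.X_ne_zero)))

instance (k : Type) [Field k] : Algebra (LaurentPolynomial k) (RatFunc k) :=
  (iR k).toAlgebra

instance (k : Type) [Field k] (F : Type) [Semiring F] [Algebra (RatFunc k) F] :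
    Algebra (LaurentPolynomial k) F :=
  RingHom.toAlgebra'
    ((algebraMap (RatFunc k) F).comp (algebraMap (LaurentPolynomial k) (RatFunc k)))
    (fun c x => Algebra.commutes ((algebraMap (LaurentPolynomial k) (RatFunc k)) c) x)

lemma iR_T (k : Type) [Field k] (n : ℤ) : iR k (LaurentPolynomial.T n) = RatFunc.X ^ n := by
  rw [iR, LaurentPolynomial.T]
  rw [AddMonoidAlgebra.lift_single]
  simp [zpowersHom_apply]

set_option synthInstance.maxHeartbeats 1000000 in
set_option maxHeartbeats 1000000 in
/-- In the quantum function algebra `F_q[SL₂] = k(q) ⊗ F̂_q[SL₂]`, the elements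
`H₊ := (a-1)/(q-1)`, `E := b/(q-1)`, `F := c/(q-1)`, `H₋ := (d-1)/(q-1)` satisfy
the listed relations and generate a `k[q,q⁻¹]`-Hopf subalgebra. -/
theorem stmt9 (k : Type) [Field k] [CharZero k]
    (Fq : Type) [Ring Fq] [HopfAlgebra (RatFunc k) Fq]
    (a b c d : Fq)
    (q : RatFunc k) (hq : q = RatFunc.X)
    -- the defining relations of `F̂_q[SL₂]`
    (hab : a * b = q • (b * a)) (hac : a * c = q • (c * a))
    (hbd : b * d = q • (d * b)) (hcd : c * d = q • (d * c))
    (hbc : b * c = c * b)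
    (had : a * d - d * a = (q - q⁻¹) • (b * c))
    (hdet : a * d - q • (b * c) = 1)
    -- Hopf structure
    (hca : Coalgebra.comul (R := RatFunc k) a = a ⊗ₜ a + b ⊗ₜ c)
    (hcb : Coalgebra.comul (R := RatFunc k) b = a ⊗ₜ b + b ⊗ₜ d)
    (hcc : Coalgebra.comul (R := RatFunc k) c = c ⊗ₜ a + d ⊗ₜ c)
    (hcd' : Coalgebra.comul (R := RatFunc k) d = c ⊗ₜ b + d ⊗ₜ d)
    (hea : Coalgebra.counit (R := RatFunc k) a = 1)
    (heb : Coalgebra.counit (R := RatFunc k) b = 0)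
    (hec : Coalgebra.counit (R := RatFunc k) c = 0)
    (hed : Coalgebra.counit (R := RatFunc k) d = 1) :
    -- the rescaled generators
    let Hp : Fq := (q - 1)⁻¹ • (a - 1)
    let E : Fq := (q - 1)⁻¹ • b
    let F : Fq := (q - 1)⁻¹ • c
    let Hm : Fq := (q - 1)⁻¹ • (d - 1)
    -- they satisfy the stated relations …
    (Hp * E = q • (E * Hp) + E) ∧ (Hp * F = q • (F * Hp) + F) ∧
    (E * Hm = q • (Hm * E) + E) ∧ (F * Hm = q • (Hm * F) + F) ∧
    (E * F = F * E) ∧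
    (Hp * Hm - Hm * Hp = (q - q⁻¹) • (E * F)) ∧
    (Hm + Hp = (q - 1) • (q • (E * F) - Hp * Hm)) ∧
    -- … and they generate a `k[q,q⁻¹]`-Hopf subalgebra of `F_q[SL₂]`
    (∀ s ∈ Algebra.adjoin (LaurentPolynomial k) {Hp, E, F, Hm},
        Coalgebra.comul (R := RatFunc k) s ∈
          Submodule.span (LaurentPolynomial k)
            {t : Fq ⊗[RatFunc k] Fq |
              ∃ u ∈ Algebra.adjoin (LaurentPolynomial k) {Hp, E, F, Hm},
                ∃ v ∈ Algebra.adjoin (LaurentPolynomial k) {Hp, E, F, Hm},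
                  t = u ⊗ₜ v}) ∧
    (∀ s ∈ Algebra.adjoin (LaurentPolynomial k) {Hp, E, F, Hm},
        HopfAlgebra.antipode (R := RatFunc k) s ∈
          Algebra.adjoin (LaurentPolynomial k) {Hp, E, F, Hm}) ∧
    (∀ s ∈ Algebra.adjoin (LaurentPolynomial k) {Hp, E, F, Hm},
        Coalgebra.counit (R := RatFunc k) s ∈ Set.range (iR k)) := by
  intro Hp E F Hm
  have hHp : Hp = (q - 1)⁻¹ • (a - 1) := rfl
  have hE : E = (q - 1)⁻¹ • b := rfl
  have hF : F = (q - 1)⁻¹ • c := rfl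
  have hHm : Hm = (q - 1)⁻¹ • (d - 1) := rfl
  have hq0 : q ≠ 0 := by rw [hq]; exact RatFunc.X_ne_zero
  have hq1 : q - 1 ≠ 0 := by
    rw [hq]
    have h2 : (Polynomial.X - 1 : Polynomial k) ≠ 0 := by
      have := Polynomial.X_sub_C_ne_zero (1 : k)
      rwa [Polynomial.C_1] at this
    have h3 := RatFunc.algebraMap_ne_zero h2
    rwa [map_sub, map_one, RatFunc.algebraMap_X] at h3
  have hdet' : a * d = 1 + q • (b * c) := sub_eq_iff_eq_add.mp hdet
  -- Laurent polynomial scalar bridging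
  have hsmulFq : ∀ (p : LaurentPolynomial k) (t : Fq), p • t = (iR k p) • t := fun p t => by
    rw [Algebra.smul_def, Algebra.smul_def]; rfl
  have hsmulT : ∀ (p : LaurentPolynomial k) (t : Fq ⊗[RatFunc k] Fq),
      p • t = (iR k p) • t := fun p t => by
    induction t using TensorProduct.induction_on with
    | zero => rw [smul_zero, smul_zero]
    | tmul x y => rw [TensorProduct.smul_tmul', TensorProduct.smul_tmul', hsmulFq]
    | add x y hx hy => rw [smul_add, smul_add, hx, hy]
  have hiq : iR k (LaurentPolynomial.T 1) = q := by rw [iR_T, zpow_one, hq]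
  have hiqinv : iR k (LaurentPolynomial.T (-1)) = q⁻¹ := by
    rw [iR_T, zpow_neg, zpow_one, hq]
  have hiq1 : iR k (LaurentPolynomial.T 1 - 1) = q - 1 := by rw [map_sub, map_one, hiq]
  -- the subalgebra and the span
  set Aadj := Algebra.adjoin (LaurentPolynomial k) ({Hp, E, F, Hm} : Set Fq) with hAadj
  have hHpA : Hp ∈ Aadj := Algebra.subset_adjoin (by simp)
  have hEA : E ∈ Aadj := Algebra.subset_adjoin (by simp)
  have hFA : F ∈ Aadj := Algebra.subset_adjoin (by simp)
  have hHmA : Hm ∈ Aadj := Algebra.subset_adjoin (by simp)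
  have h1A : (1 : Fq) ∈ Aadj := one_mem _
  set Mspan := Submodule.span (LaurentPolynomial k)
      {t : Fq ⊗[RatFunc k] Fq | ∃ u ∈ Aadj, ∃ v ∈ Aadj, t = u ⊗ₜ v} with hMspan
  have hmemT : ∀ u v : Fq, u ∈ Aadj → v ∈ Aadj → (u ⊗ₜ[RatFunc k] v) ∈ Mspan :=
    fun u v hu hv => Submodule.subset_span ⟨u, hu, v, hv, rfl⟩
  have hsmem : ∀ u v : Fq, u ∈ Aadj → v ∈ Aadj →
      (q - 1) • (u ⊗ₜ[RatFunc k] v) ∈ Mspan := fun u v hu hv => by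
    rw [← hiq1, ← hsmulT]
    exact Submodule.smul_mem _ _ (hmemT u v hu hv)
  -- comul formulas
  have hcHp : Coalgebra.comul (R := RatFunc k) Hp
      = (q-1) • (Hp ⊗ₜ Hp) + Hp ⊗ₜ 1 + 1 ⊗ₜ Hp + (q-1) • (E ⊗ₜ F) := by
    have hTa : (a - 1) ⊗ₜ[RatFunc k] (a - 1)
        = a ⊗ₜ a - a ⊗ₜ 1 - 1 ⊗ₜ a + 1 ⊗ₜ 1 := by
      rw [TensorProduct.sub_tmul, TensorProduct.tmul_sub, TensorProduct.tmul_sub]; abel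
    have eHpHp : Hp ⊗ₜ[RatFunc k] Hp
        = (q-1)⁻¹ • ((q-1)⁻¹ • (a ⊗ₜ a - a ⊗ₜ 1 - 1 ⊗ₜ a + 1 ⊗ₜ 1)) := by
      rw [hHp, ← TensorProduct.smul_tmul', TensorProduct.tmul_smul, hTa]
    have eHp1 : Hp ⊗ₜ[RatFunc k] (1 : Fq) = (q-1)⁻¹ • (a ⊗ₜ 1 - 1 ⊗ₜ 1) := by
      rw [hHp, ← TensorProduct.smul_tmul', TensorProduct.sub_tmul]
    have e1Hp : (1 : Fq) ⊗ₜ[RatFunc k] Hp = (q-1)⁻¹ • (1 ⊗ₜ a - 1 ⊗ₜ 1) := by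
      rw [hHp, TensorProduct.tmul_smul, TensorProduct.tmul_sub]
    have eEF : E ⊗ₜ[RatFunc k] F = (q-1)⁻¹ • ((q-1)⁻¹ • (b ⊗ₜ c)) := by
      rw [hE, hF, ← TensorProduct.smul_tmul', TensorProduct.tmul_smul]
    rw [eHpHp, eHp1, e1Hp, eEF, hHp, map_smul, map_sub, hca, Bialgebra.comul_one,
      Algebra.TensorProduct.one_def]
    exact keyHp q hq1 _ _ _ _ _
  have hcE : Coalgebra.comul (R := RatFunc k) E
      = (q-1) • (Hp ⊗ₜ E) + 1 ⊗ₜ E + (q-1) • (E ⊗ₜ Hm) + E ⊗ₜ 1 := by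
    have eHpE : Hp ⊗ₜ[RatFunc k] E = (q-1)⁻¹ • ((q-1)⁻¹ • (a ⊗ₜ b - 1 ⊗ₜ b)) := by
      rw [hHp, hE, ← TensorProduct.smul_tmul', TensorProduct.tmul_smul, TensorProduct.sub_tmul]
    have e1E : (1 : Fq) ⊗ₜ[RatFunc k] E = (q-1)⁻¹ • (1 ⊗ₜ b) := by
      rw [hE, TensorProduct.tmul_smul]
    have eEHm : E ⊗ₜ[RatFunc k] Hm = (q-1)⁻¹ • ((q-1)⁻¹ • (b ⊗ₜ d - b ⊗ₜ 1)) := by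
      rw [hE, hHm, ← TensorProduct.smul_tmul', TensorProduct.tmul_smul, TensorProduct.tmul_sub]
    have eE1 : E ⊗ₜ[RatFunc k] (1 : Fq) = (q-1)⁻¹ • (b ⊗ₜ 1) := by
      rw [hE, ← TensorProduct.smul_tmul']
    rw [eHpE, e1E, eEHm, eE1, hE, map_smul, hcb]
    exact keyE q hq1 _ _ _ _
  have hcF : Coalgebra.comul (R := RatFunc k) F
      = (q-1) • (F ⊗ₜ Hp) + F ⊗ₜ 1 + (q-1) • (Hm ⊗ₜ F) + 1 ⊗ₜ F := by
    have eFHp : F ⊗ₜ[RatFunc k] Hp = (q-1)⁻¹ • ((q-1)⁻¹ • (c ⊗ₜ a - c ⊗ₜ 1)) := by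
      rw [hF, hHp, ← TensorProduct.smul_tmul', TensorProduct.tmul_smul, TensorProduct.tmul_sub]
    have eF1 : F ⊗ₜ[RatFunc k] (1 : Fq) = (q-1)⁻¹ • (c ⊗ₜ 1) := by
      rw [hF, ← TensorProduct.smul_tmul']
    have eHmF : Hm ⊗ₜ[RatFunc k] F = (q-1)⁻¹ • ((q-1)⁻¹ • (d ⊗ₜ c - 1 ⊗ₜ c)) := by
      rw [hHm, hF, ← TensorProduct.smul_tmul', TensorProduct.tmul_smul, TensorProduct.sub_tmul]
    have e1F : (1 : Fq) ⊗ₜ[RatFunc k] F = (q-1)⁻¹ • (1 ⊗ₜ c) := by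
      rw [hF, TensorProduct.tmul_smul]
    rw [eFHp, eF1, eHmF, e1F, hF, map_smul, hcc]
    exact keyE q hq1 _ _ _ _
  have hcHm : Coalgebra.comul (R := RatFunc k) Hm
      = (q-1) • (Hm ⊗ₜ Hm) + Hm ⊗ₜ 1 + 1 ⊗ₜ Hm + (q-1) • (F ⊗ₜ E) := by
    have hTd : (d - 1) ⊗ₜ[RatFunc k] (d - 1)
        = d ⊗ₜ d - d ⊗ₜ 1 - 1 ⊗ₜ d + 1 ⊗ₜ 1 := by
      rw [TensorProduct.sub_tmul, TensorProduct.tmul_sub, TensorProduct.tmul_sub]; abel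
    have eHmHm : Hm ⊗ₜ[RatFunc k] Hm
        = (q-1)⁻¹ • ((q-1)⁻¹ • (d ⊗ₜ d - d ⊗ₜ 1 - 1 ⊗ₜ d + 1 ⊗ₜ 1)) := by
      rw [hHm, ← TensorProduct.smul_tmul', TensorProduct.tmul_smul, hTd]
    have eHm1 : Hm ⊗ₜ[RatFunc k] (1 : Fq) = (q-1)⁻¹ • (d ⊗ₜ 1 - 1 ⊗ₜ 1) := by
      rw [hHm, ← TensorProduct.smul_tmul', TensorProduct.sub_tmul]
    have e1Hm : (1 : Fq) ⊗ₜ[RatFunc k] Hm = (q-1)⁻¹ • (1 ⊗ₜ d - 1 ⊗ₜ 1) := by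
      rw [hHm, TensorProduct.tmul_smul, TensorProduct.tmul_sub]
    have eFE : F ⊗ₜ[RatFunc k] E = (q-1)⁻¹ • ((q-1)⁻¹ • (c ⊗ₜ b)) := by
      rw [hF, hE, ← TensorProduct.smul_tmul', TensorProduct.tmul_smul]
    rw [eHmHm, eHm1, e1Hm, eFE, hHm, map_smul, map_sub, hcd', Bialgebra.comul_one,
      Algebra.TensorProduct.one_def,
      show (c ⊗ₜ[RatFunc k] b) + (d ⊗ₜ[RatFunc k] d) = d ⊗ₜ d + c ⊗ₜ b from add_comm _ _]
    exact keyHp q hq1 _ _ _ _ _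
  -- antipode values (as in the test file)
  set S := HopfAlgebra.antipode (R := RatFunc k) (A := Fq) with hSdef
  have ax : ∀ z : Fq, LinearMap.mul' (RatFunc k) Fq
      ((HopfAlgebra.antipode (R := RatFunc k)).rTensor Fq (Coalgebra.comul z))
      = algebraMap (RatFunc k) Fq (Coalgebra.counit z) :=
    fun z => HopfAlgebra.mul_antipode_rTensor_comul_apply z
  have ax1 : S a * a + S b * c = 1 := by
    have h := ax a; rw [hca, hea] at h; simpa [LinearMap.mul'_apply] using h
  have ax2 : S a * b + S b * d = 0 := by
    have h := ax b; rw [hcb, heb] at h; simpa [LinearMap.mul'_apply] using h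
  have ax3 : S c * a + S d * c = 0 := by
    have h := ax c; rw [hcc, hec] at h; simpa [LinearMap.mul'_apply] using h
  have ax4 : S c * b + S d * d = 1 := by
    have h := ax d; rw [hcd', hed] at h; simpa [LinearMap.mul'_apply] using h
  have hda : d * a = 1 + q⁻¹ • (b * c) := by
    have h2 : d * a = a * d - (q - q⁻¹) • (b * c) := by rw [← had]; abel
    rw [hdet', sub_smul] at h2
    rw [h2]; abel
  have e1d : S a * (a * d) + S b * (c * d) = d := by
    have h := congrArg (· * d) ax1; simpa [add_mul, mul_assoc] using h
  have e2c : S a * (b * c) + S b * (d * c) = 0 := by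
    have h := congrArg (· * c) ax2; simpa [add_mul, mul_assoc] using h
  have hSa : S a = d := by
    have h3 : S a * (a * d) = d - S b * (c * d) := eq_sub_of_add_eq e1d
    have h4 : S a * (b * c) = -(S b * (d * c)) := eq_neg_of_add_eq_zero_left e2c
    calc S a = S a * (a * d) - q • (S a * (b * c)) := by
          rw [← mul_smul_comm, ← mul_sub, hdet, mul_one]
      _ = d := by rw [h3, h4, hcd, mul_smul_comm, smul_neg]; abel
  have e1b : S a * (a * b) + S b * (c * b) = b := by
    have h := congrArg (· * b) ax1; simpa [add_mul, mul_assoc] using h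
  have e2a : S a * (b * a) + S b * (d * a) = 0 := by
    have h := congrArg (· * a) ax2; simpa [add_mul, mul_assoc] using h
  have hSb : S b = -(q⁻¹ • b) := by
    rw [hab, mul_smul_comm] at e1b
    have h5 : S b * (c * b) = b - q • (S a * (b * a)) := eq_sub_of_add_eq' e1b
    have h6 : S b * (d * a) = -(S a * (b * a)) := eq_neg_of_add_eq_zero_right e2a
    have h7 : S b * (c * b) - q • (S b * (d * a)) = b := by
      rw [h5, h6, smul_neg]; abel
    have h8 : c * b - q • (d * a) = -(q • (1 : Fq)) := by
      rw [← hbc, hda, smul_add, smul_smul, mul_inv_cancel₀ hq0, one_smul]; abel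
    have h9 : S b * (c * b - q • (d * a)) = b := by
      rw [mul_sub, mul_smul_comm]; exact h7
    rw [h8, mul_neg, mul_smul_comm, mul_one] at h9
    have h10 : q • S b = -b := neg_eq_iff_eq_neg.mp h9
    rw [← inv_smul_smul₀ hq0 (S b), h10, smul_neg]
  have e4c : S c * (b * c) + S d * (d * c) = c := by
    have h := congrArg (· * c) ax4; simpa [add_mul, mul_assoc] using h
  have e3d : S c * (a * d) + S d * (c * d) = 0 := by
    have h := congrArg (· * d) ax3; simpa [add_mul, mul_assoc] using h
  have hSc : S c = -(q • c) := by
    have h10 : S d * (d * c) = c - S c * (b * c) := eq_sub_of_add_eq' e4c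
    rw [hcd, mul_smul_comm] at e3d
    have h11 : S c * (a * d) = -(q • (S d * (d * c))) := eq_neg_of_add_eq_zero_left e3d
    calc S c = S c * (a * d) - q • (S c * (b * c)) := by
          rw [← mul_smul_comm, ← mul_sub, hdet, mul_one]
      _ = -(q • c) := by rw [h11, h10, smul_sub]; abel
  have e4a : S c * (b * a) + S d * (d * a) = a := by
    have h := congrArg (· * a) ax4; simpa [add_mul, mul_assoc] using h
  have e3b : S c * (a * b) + S d * (c * b) = 0 := by
    have h := congrArg (· * b) ax3; simpa [add_mul, mul_assoc] using h
  have hSd : S d = a := by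
    rw [hab, mul_smul_comm] at e3b
    have h12 : q • (S c * (b * a)) = -(S d * (c * b)) := eq_neg_of_add_eq_zero_left e3b
    have h13 : q • (S c * (b * a)) + q • (S d * (d * a)) = q • a := by
      rw [← smul_add, e4a]
    rw [h12] at h13
    have h14 : q • (S d * (d * a)) = q • S d + S d * (b * c) := by
      rw [hda, mul_add, mul_one, mul_smul_comm, smul_add, smul_smul,
        mul_inv_cancel₀ hq0, one_smul]
    rw [h14, ← hbc] at h13
    have h15 : q • S d = q • a := by rw [← h13]; abel
    calc S d = q⁻¹ • (q • S d) := (inv_smul_smul₀ hq0 (S d)).symm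
      _ = q⁻¹ • (q • a) := by rw [h15]
      _ = a := inv_smul_smul₀ hq0 a
  -- antipode on the generators
  have hSHp : S Hp = Hm := by
    rw [hHp, map_smul, map_sub, hSa, hSdef, antipode_one', hHm]
  have hSHm : S Hm = Hp := by
    rw [hHm, map_smul, map_sub, hSd, hSdef, antipode_one', hHp]
  have hSE : S E = -(q⁻¹ • E) := by
    rw [hE, map_smul, hSb, smul_neg, smul_comm]
  have hSF : S F = -(q • F) := by
    rw [hF, map_smul, hSc, smul_neg, smul_comm]
  -- multiplicativity closure for the span
  have hmulM : ∀ s t : Fq ⊗[RatFunc k] Fq, s ∈ Mspan → t ∈ Mspan → s * t ∈ Mspan := by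
    intro s t hs ht
    induction hs using Submodule.span_induction with
    | mem x hx =>
      induction ht using Submodule.span_induction with
      | mem y hy =>
        obtain ⟨u, hu, v, hv, rfl⟩ := hx
        obtain ⟨u', hu', v', hv', rfl⟩ := hy
        rw [Algebra.TensorProduct.tmul_mul_tmul]
        exact Submodule.subset_span ⟨_, mul_mem hu hu', _, mul_mem hv hv', rfl⟩
      | zero => rw [mul_zero]; exact zero_mem _
      | add y z _ _ ihy ihz => rw [mul_add]; exact add_mem ihy ihz
      | smul r y _ ihy => rw [mul_smul_comm]; exact Submodule.smul_mem _ _ ihy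
    | zero => rw [zero_mul]; exact zero_mem _
    | add x y _ _ ihx ihy => rw [add_mul]; exact add_mem ihx ihy
    | smul r x _ ihx => rw [smul_mul_assoc]; exact Submodule.smul_mem _ _ ihx
  refine ⟨?_, ?_, ?_, ?_, ?_, ?_, ?_, ?_, ?_, ?_⟩
  · rw [hHp, hE]; exact relA q hq1 a b hab
  · rw [hHp, hF]; exact relA q hq1 a c hac
  · rw [hE, hHm]; exact relB q hq1 b d hbd
  · rw [hF, hHm]; exact relB q hq1 c d hcd
  · rw [hE, hF, smul_mul_assoc, mul_smul_comm, smul_mul_assoc, mul_smul_comm, hbc]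
  · rw [hHp, hHm, hE, hF]; exact relC q hq1 a b c d had
  · rw [hHm, hHp, hE, hF]; exact relD q hq1 a b c d hdet'
  · -- comul maps the subalgebra into the span
    intro s hs
    induction hs using Algebra.adjoin_induction with
    | mem g hg =>
      simp only [Set.mem_insert_iff, Set.mem_singleton_iff] at hg
      rcases hg with rfl | rfl | rfl | rfl
      · rw [hcHp]
        exact add_mem (add_mem (add_mem (hsmem _ _ hHpA hHpA) (hmemT _ _ hHpA h1A))
          (hmemT _ _ h1A hHpA)) (hsmem _ _ hEA hFA)
      · rw [hcE]
        exact add_mem (add_mem (add_mem (hsmem _ _ hHpA hEA) (hmemT _ _ h1A hEA))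
          (hsmem _ _ hEA hHmA)) (hmemT _ _ hEA h1A)
      · rw [hcF]
        exact add_mem (add_mem (add_mem (hsmem _ _ hFA hHpA) (hmemT _ _ hFA h1A))
          (hsmem _ _ hHmA hFA)) (hmemT _ _ h1A hFA)
      · rw [hcHm]
        exact add_mem (add_mem (add_mem (hsmem _ _ hHmA hHmA) (hmemT _ _ hHmA h1A))
          (hmemT _ _ h1A hHmA)) (hsmem _ _ hFA hEA)
    | algebraMap r =>
      have h0 : algebraMap (LaurentPolynomial k) Fq r
          = algebraMap (RatFunc k) Fq (iR k r) := rfl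
      rw [h0, Bialgebra.comul_algebraMap, Algebra.algebraMap_eq_smul_one, ← hsmulT,
        Algebra.TensorProduct.one_def]
      exact Submodule.smul_mem _ _ (hmemT 1 1 h1A h1A)
    | add x y hx hy ihx ihy => rw [map_add]; exact add_mem ihx ihy
    | mul x y hx hy ihx ihy => rw [Bialgebra.comul_mul]; exact hmulM _ _ ihx ihy
  · -- antipode preserves the subalgebra
    intro s hs
    induction hs using Algebra.adjoin_induction with
    | mem g hg =>
      simp only [Set.mem_insert_iff, Set.mem_singleton_iff] at hg
      rcases hg with rfl | rfl | rfl | rfl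
      · show S Hp ∈ Aadj; rw [hSHp]; exact hHmA
      · show S E ∈ Aadj
        rw [hSE, show q⁻¹ • E = (LaurentPolynomial.T (-1)) • E by rw [hsmulFq, hiqinv]]
        exact neg_mem (Subalgebra.smul_mem _ hEA _)
      · show S F ∈ Aadj
        rw [hSF, show q • F = (LaurentPolynomial.T 1) • F by rw [hsmulFq, hiq]]
        exact neg_mem (Subalgebra.smul_mem _ hFA _)
      · show S Hm ∈ Aadj; rw [hSHm]; exact hHpA
    | algebraMap r =>
      show S (algebraMap (LaurentPolynomial k) Fq r) ∈ Aadj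
      have h0 : algebraMap (LaurentPolynomial k) Fq r
          = (iR k r) • (1 : Fq) := by
        rw [show algebraMap (LaurentPolynomial k) Fq r
            = algebraMap (RatFunc k) Fq (iR k r) from rfl,
          Algebra.algebraMap_eq_smul_one]
      rw [h0, map_smul, hSdef, antipode_one', ← h0]
      exact Subalgebra.algebraMap_mem _ r
    | add x y hx hy ihx ihy =>
      show S (x + y) ∈ Aadj; rw [map_add]; exact add_mem ihx ihy
    | mul x y hx hy ihx ihy =>
      show S (x * y) ∈ Aadj
      rw [hSdef, antipode_mul_rev]
      exact mul_mem ihy ihx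
  · -- counit lands in the image of the Laurent polynomials
    intro s hs
    induction hs using Algebra.adjoin_induction with
    | mem g hg =>
      simp only [Set.mem_insert_iff, Set.mem_singleton_iff] at hg
      rcases hg with rfl | rfl | rfl | rfl
      · refine ⟨0, ?_⟩
        rw [map_zero, hHp, map_smul, map_sub, hea, Bialgebra.counit_one, sub_self, smul_zero]
      · refine ⟨0, ?_⟩
        rw [map_zero, hE, map_smul, heb, smul_zero]
      · refine ⟨0, ?_⟩
        rw [map_zero, hF, map_smul, hec, smul_zero]
      · refine ⟨0, ?_⟩
        rw [map_zero, hHm, map_smul, map_sub, hed, Bialgebra.counit_one, sub_self, smul_zero]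
    | algebraMap r =>
      refine ⟨r, ?_⟩
      rw [show algebraMap (LaurentPolynomial k) Fq r
          = algebraMap (RatFunc k) Fq (iR k r) from rfl, Bialgebra.counit_algebraMap]
    | add x y hx hy ihx ihy =>
      obtain ⟨p, hp⟩ := ihx
      obtain ⟨p', hp'⟩ := ihy
      exact ⟨p + p', by rw [map_add, hp, hp', map_add]⟩
    | mul x y hx hy ihx ihy =>
      obtain ⟨p, hp⟩ := ihx
      obtain ⟨p', hp'⟩ := ihy
      exact ⟨p * p', by rw [map_mul, hp, hp', Bialgebra.counit_mul]⟩

end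
end
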